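/- arXiv:1605.06763 — 6 statements merged into one kernel-verified Lean document; each statement's English description precedes it below -/
import Mathlib

section
/- If λ ∈ [0,1], a > b > 0 are real numbers, and z ∈ ℂ with |z| < b, then λ·Re(z²/(a(a−z))) − Re(z²/(b(b−z))) ≥ λ·|z|²/(a(a−|z|)) − |z|²/(b(b−|z|)). -/
/-!
With `f_c(z) = z² / (c (c - z)) = ∑_{n ≥ 2} (z / c)ⁿ`, the series of `f_a` and of `f_b - f_a`
have nonnegative coefficients `a⁻ⁿ` and `b⁻ⁿ - a⁻ⁿ`, so their moduli at `z` are bounded by their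
values at `|z|`. Since `1 - λ ≥ 0`, the claim follows from
`λ Re f_a(z) - Re f_b(z) = -(1 - λ) Re f_a(z) - Re (f_b(z) - f_a(z))`.
-/

theorem hasSum_sq_div_mul_sub {K : Type*} [NormedField K] {c z : K} (hz : ‖z‖ < ‖c‖) :
    HasSum (fun n : ℕ ↦ (z / c) ^ (n + 2)) (z ^ 2 / (c * (c - z))) := by
  have hc : c ≠ 0 := norm_pos_iff.mp ((norm_nonneg z).trans_lt hz)
  have hcz : c - z ≠ 0 := by
    rw [sub_ne_zero]; rintro rfl; exact hz.false
  have hq : ‖z / c‖ < 1 := by rwa [norm_div, div_lt_one ((norm_nonneg z).trans_lt hz)]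
  have hfactor : z ^ 2 / (c * (c - z)) = (z / c) ^ 2 * (1 - z / c)⁻¹ := by field_simp
  rw [hfactor]
  simpa only [pow_add, mul_comm] using (hasSum_geometric_of_norm_lt_one hq).mul_left ((z / c) ^ 2)

theorem hasSum_sq_div_ofReal_mul_sub {z : ℂ} {c : ℝ} (hz : ‖z‖ < c) :
    HasSum (fun n : ℕ ↦ (z / c) ^ (n + 2)) (z ^ 2 / (c * (c - z))) ∧
      HasSum (fun n : ℕ ↦ (‖z‖ / c) ^ (n + 2)) (‖z‖ ^ 2 / (c * (c - ‖z‖))) := by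
  have hc : 0 ≤ c := (norm_nonneg z).trans hz.le
  constructor
  · exact hasSum_sq_div_mul_sub (by rwa [Complex.norm_real, Real.norm_of_nonneg hc])
  · exact hasSum_sq_div_mul_sub (by rwa [norm_norm, Real.norm_of_nonneg hc])

theorem norm_sq_div_ofReal_mul_sub_le {z : ℂ} {a : ℝ} (hz : ‖z‖ < a) :
    ‖z ^ 2 / ((a : ℂ) * (a - z))‖ ≤ ‖z‖ ^ 2 / (a * (a - ‖z‖)) := by
  obtain ⟨hsum, hsum_norm⟩ := hasSum_sq_div_ofReal_mul_sub hz
  refine hsum.norm_le_of_bounded hsum_norm fun n ↦ ?_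
  rw [norm_pow, norm_div, Complex.norm_real, Real.norm_of_nonneg ((norm_nonneg z).trans hz.le)]

theorem norm_sq_div_ofReal_mul_sub_sub_le {z : ℂ} {a b : ℝ} (hab : b ≤ a) (hz : ‖z‖ < b) :
    ‖z ^ 2 / ((b : ℂ) * (b - z)) - z ^ 2 / ((a : ℂ) * (a - z))‖
      ≤ ‖z‖ ^ 2 / (b * (b - ‖z‖)) - ‖z‖ ^ 2 / (a * (a - ‖z‖)) := by
  obtain ⟨hsum_b, hsum_norm_b⟩ := hasSum_sq_div_ofReal_mul_sub hz
  obtain ⟨hsum_a, hsum_norm_a⟩ := hasSum_sq_div_ofReal_mul_sub (hz.trans_le hab)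
  refine (hsum_b.sub hsum_a).norm_le_of_bounded (hsum_norm_b.sub hsum_norm_a) fun n ↦ ?_
  have hb : 0 < b := (norm_nonneg z).trans_lt hz
  have hcoeff : a⁻¹ ^ (n + 2) ≤ b⁻¹ ^ (n + 2) := by
    have ha : 0 < a := hb.trans_le hab
    gcongr
  have hterm : (z / b) ^ (n + 2) - (z / a) ^ (n + 2)
      = z ^ (n + 2) * ((b⁻¹ ^ (n + 2) - a⁻¹ ^ (n + 2) : ℝ) : ℂ) := by
    push_cast; ring
  rw [hterm, norm_mul, norm_pow, Complex.norm_real, Real.norm_of_nonneg (sub_nonneg.mpr hcoeff)]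
  exact le_of_eq (by ring)

theorem lemma_minus_general (lam a b : ℝ) (hlam1 : lam ≤ 1)
    (hab : b < a) (z : ℂ) (hz : ‖z‖ < b) :
    lam * ‖z‖ ^ 2 / (a * (a - ‖z‖))
      - ‖z‖ ^ 2 / (b * (b - ‖z‖))
    ≤ lam * (z ^ 2 / ((a : ℂ) * ((a : ℂ) - z))).re - (z ^ 2 / ((b : ℂ) * ((b : ℂ) - z))).re := by
  have hre_a := (Complex.re_le_norm _).trans (norm_sq_div_ofReal_mul_sub_le (hz.trans hab))
  have hre_sub := (Complex.re_le_norm _).trans (norm_sq_div_ofReal_mul_sub_sub_le hab.le hz)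
  rw [Complex.sub_re] at hre_sub
  rw [mul_div_assoc]
  linarith [mul_le_mul_of_nonneg_left hre_a (sub_nonneg.mpr hlam1)]

/-- If λ ∈ [0,1], a > b > 0 and |z| < b, then
λ·Re(z²/(a(a−z))) − Re(z²/(b(b−z))) ≥ λ·|z|²/(a(a−|z|)) − |z|²/(b(b−|z|)). -/
theorem lemma_minus (lam a b : ℝ) (hlam0 : 0 ≤ lam) (hlam1 : lam ≤ 1)
    (hab : b < a) (hb : 0 < b) (z : ℂ) (hz : ‖z‖ < b) :
    lam * ‖z‖ ^ 2 / (a * (a - ‖z‖))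
      - ‖z‖ ^ 2 / (b * (b - ‖z‖))
    ≤ lam * (z ^ 2 / ((a : ℂ) * ((a : ℂ) - z))).re - (z ^ 2 / ((b : ℂ) * ((b : ℂ) - z))).re :=
  lemma_minus_general lam a b hlam1 hab z hz
end

section
/- If a > b > 0 are real numbers and z ∈ ℂ with |z| < b, then Re(z²/(a(a−z))) − |z|²/(a(a−|z|)) ≥ Re(z²/(b(b−z))) − |z|²/(b(b−|z|)), with strict inequality when |z| < b < a and z is not a nonnegative real. -/
/-!
Expanding in geometric series, `z² / (t (t - z)) = ∑_{k ≥ 2} z^k / t^k`, so the difference in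
question is `∑_{k ≥ 2} (Re z^k - |z|^k) / t^k`. Every numerator is `≤ 0` and every `1 / t^k`
decreases in `t`, so each term increases with `t`. Unless `z ≥ 0`, the numerator for `k = 2` or
`k = 3` is negative, since `z = z³ / z²`.
-/

open scoped ComplexOrder

theorem hasSum_div_pow_add_two {𝕜 : Type*} [NormedField 𝕜] [CompleteSpace 𝕜] {z t : 𝕜}
    (h : ‖z‖ < ‖t‖) : HasSum (fun n : ℕ ↦ (z / t) ^ (n + 2)) (z ^ 2 / (t * (t - z))) := by
  have ht : t ≠ 0 := norm_pos_iff.1 ((norm_nonneg z).trans_lt h)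
  have htz : t - z ≠ 0 := sub_ne_zero.2 fun e ↦ h.ne (congrArg norm e).symm
  have hlt : ‖z / t‖ < 1 := by rwa [norm_div, div_lt_one (norm_pos_iff.2 ht)]
  have hsum : (z / t) ^ 2 * (1 - z / t)⁻¹ = z ^ 2 / (t * (t - z)) := by
    rw [one_sub_div ht, inv_div, div_pow]
    field_simp
  rw [← hsum]
  simpa only [pow_add, mul_comm] using (hasSum_geometric_of_norm_lt_one hlt).mul_left ((z / t) ^ 2)

theorem hasSum_re_pow_sub_norm_pow_div_pow (z : ℂ) {t : ℝ} (h : ‖z‖ < t) :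
    HasSum (fun n : ℕ ↦ ((z ^ (n + 2)).re - ‖z‖ ^ (n + 2)) / t ^ (n + 2))
      ((z ^ 2 / ((t : ℂ) * ((t : ℂ) - z))).re - ‖z‖ ^ 2 / (t * (t - ‖z‖))) := by
  have ht : 0 < t := (norm_nonneg z).trans_lt h
  have hzt : ‖z‖ < ‖(t : ℂ)‖ := by rwa [Complex.norm_of_nonneg ht.le]
  have hrt : ‖‖z‖‖ < ‖t‖ := by rwa [norm_norm, Real.norm_of_nonneg ht.le]
  have := (Complex.hasSum_re (hasSum_div_pow_add_two hzt)).sub (hasSum_div_pow_add_two hrt)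
  simpa only [div_pow, ← Complex.ofReal_pow, Complex.div_ofReal_re, ← sub_div] using this

theorem re_pow_le_norm_pow (z : ℂ) (k : ℕ) : (z ^ k).re ≤ ‖z‖ ^ k :=
  norm_pow z k ▸ Complex.re_le_norm _

section OrderedField

variable {α : Type*} [Field α] [LinearOrder α] [IsStrictOrderedRing α]

theorem div_pow_le_div_pow_of_nonpos {c s t : α} (hc : c ≤ 0) (hs : 0 < s) (hst : s ≤ t) (k : ℕ) :
    c / s ^ k ≤ c / t ^ k := by
  have := div_le_div_of_nonneg_left (neg_nonneg.2 hc) (pow_pos hs k) (pow_le_pow_left₀ hs.le hst k)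
  rwa [neg_div, neg_div, neg_le_neg_iff] at this

theorem div_pow_lt_div_pow_of_neg {c s t : α} (hc : c < 0) (hs : 0 < s) (hst : s < t) {k : ℕ}
    (hk : k ≠ 0) : c / s ^ k < c / t ^ k := by
  have := div_lt_div_of_pos_left (neg_pos.2 hc) (pow_pos hs k) (pow_lt_pow_left₀ hst hs.le hk)
  rwa [neg_div, neg_div, neg_lt_neg_iff] at this

end OrderedField

theorem exists_re_pow_add_two_lt_norm_pow {z : ℂ} (hz : ¬ 0 ≤ z) :
    ∃ n : ℕ, (z ^ (n + 2)).re < ‖z‖ ^ (n + 2) := by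
  by_contra! h
  have nonneg_pow (n : ℕ) : 0 ≤ z ^ (n + 2) :=
    Complex.re_eq_norm.1 ((Complex.re_le_norm _).antisymm (by rw [norm_pow]; exact h n))
  have hz0 : z ≠ 0 := by rintro rfl; exact hz le_rfl
  have : z = z ^ 3 / z ^ 2 := by field_simp
  exact hz (this ▸ div_nonneg (nonneg_pow 1) (nonneg_pow 0))

theorem monotone_difference_general (a b : ℝ) (hab : b < a) (z : ℂ)
    (hz : ‖z‖ < b) :
    ((z ^ 2 / ((b : ℂ) * ((b : ℂ) - z))).re - (‖z‖) ^ 2 / (b * (b - ‖z‖))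
      ≤ (z ^ 2 / ((a : ℂ) * ((a : ℂ) - z))).re - (‖z‖) ^ 2 / (a * (a - ‖z‖)))
    ∧ (¬ (z.im = 0 ∧ 0 ≤ z.re) →
      (z ^ 2 / ((b : ℂ) * ((b : ℂ) - z))).re - (‖z‖) ^ 2 / (b * (b - ‖z‖))
      < (z ^ 2 / ((a : ℂ) * ((a : ℂ) - z))).re - (‖z‖) ^ 2 / (a * (a - ‖z‖))) := by
  have hb : 0 < b := (norm_nonneg z).trans_lt hz
  have sum_b := hasSum_re_pow_sub_norm_pow_div_pow z hz
  have sum_a := hasSum_re_pow_sub_norm_pow_div_pow z (hz.trans hab)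
  have term_le (n : ℕ) := div_pow_le_div_pow_of_nonpos
    (sub_nonpos.2 (re_pow_le_norm_pow z (n + 2))) hb hab.le (n + 2)
  refine ⟨hasSum_le term_le sum_b sum_a, fun hz_not_nonneg ↦ ?_⟩
  obtain ⟨n, hn⟩ := exists_re_pow_add_two_lt_norm_pow (z := z) fun h ↦
    hz_not_nonneg ⟨(Complex.nonneg_iff.1 h).2.symm, (Complex.nonneg_iff.1 h).1⟩
  exact hasSum_lt (i := n) term_le
    (div_pow_lt_div_pow_of_neg (sub_neg.2 hn) hb hab (Nat.succ_ne_zero _)) sum_b sum_a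

/-- If a > b > 0 and |z| < b, then
Re(z²/(a(a−z))) − |z|²/(a(a−|z|)) ≥ Re(z²/(b(b−z))) − |z|²/(b(b−|z|)), with strict
inequality when z is not a nonnegative real. -/
theorem monotone_difference (a b : ℝ) (hab : b < a) (hb : 0 < b) (z : ℂ)
    (hz : ‖z‖ < b) :
    ((z ^ 2 / ((b : ℂ) * ((b : ℂ) - z))).re - (‖z‖) ^ 2 / (b * (b - ‖z‖))
      ≤ (z ^ 2 / ((a : ℂ) * ((a : ℂ) - z))).re - (‖z‖) ^ 2 / (a * (a - ‖z‖)))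
    ∧ (¬ (z.im = 0 ∧ 0 ≤ z.re) →
      (z ^ 2 / ((b : ℂ) * ((b : ℂ) - z))).re - (‖z‖) ^ 2 / (b * (b - ‖z‖))
      < (z ^ 2 / ((a : ℂ) * ((a : ℂ) - z))).re - (‖z‖) ^ 2 / (a * (a - ‖z‖))) :=
  monotone_difference_general a b hab z hz
end

section
/- Let L, η ∈ ℂ with Re(L) ≥ 1/2, Im(L) ≥ 1, and (1 + Im(L) + |η|)² ≤ (Re(L) − 1/2)². Then for all x, y ∈ (−1,1) with x²+y²<1 and all ρ, σ, μ ∈ ℝ satisfying μ + σ ≤ 0 and σ ≤ −(1+ρ²)/2, one has (μ + σ) + (2Re(L) − 1)σ − (2xy − 2y·Re(η) − 2x·Im(η) − 2Im(L))ρ < 0. -/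
/-!
The coefficient of `ρ` is bounded by `|2xy| + 2|y Re η + x Im η| + 2 Im L < 1 + 2‖η‖ + 2 Im L`,
which the hypothesis on `L` and `η` puts strictly below `2 Re L - 1`; the middle term is the real
part of `η (y - x i)`, with `|y - x i| < 1`. Since `|ρ| ≤ (1 + ρ²)/2 ≤ -σ`, the term `(2 Re L - 1) σ`
then dominates the `ρ` term, and `μ + σ ≤ 0` does the rest.
-/

lemma abs_mul_re_add_mul_im_le_norm {x y : ℝ} (hxy : x ^ 2 + y ^ 2 ≤ 1) (η : ℂ) :
    |y * η.re + x * η.im| ≤ ‖η‖ := by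
  have hw : ‖(⟨y, -x⟩ : ℂ)‖ ≤ 1 := by
    rw [← sq_le_one_iff₀ (norm_nonneg _), Complex.sq_norm, Complex.normSq_mk]
    nlinarith
  calc |y * η.re + x * η.im| = |(η * ⟨y, -x⟩).re| := by
        rw [Complex.mul_re]; ring_nf
    _ ≤ ‖η * ⟨y, -x⟩‖ := Complex.abs_re_le_norm _
    _ ≤ ‖η‖ := by
        rw [norm_mul]; exact mul_le_of_le_one_right (norm_nonneg _) hw

lemma abs_two_mul_lt_one {x y : ℝ} (hxy : x ^ 2 + y ^ 2 < 1) : |2 * x * y| < 1 := by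
  rw [abs_lt]
  constructor <;> nlinarith [sq_nonneg (x + y), sq_nonneg (x - y)]

lemma abs_le_one_add_sq_div_two (ρ : ℝ) : |ρ| ≤ (1 + ρ ^ 2) / 2 := by
  nlinarith [sq_nonneg (|ρ| - 1), sq_abs ρ]

lemma mul_sub_mul_neg_of_abs_lt {a b ρ σ : ℝ} (hb : |b| < a) (hσ : σ ≤ -(1 + ρ ^ 2) / 2) :
    a * σ - b * ρ < 0 := by
  have ha : 0 ≤ a := (abs_nonneg b).trans hb.le
  have hρ : 0 < (1 + ρ ^ 2) / 2 := by positivity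
  calc a * σ - b * ρ ≤ a * (-(1 + ρ ^ 2) / 2) + |b| * |ρ| := by
        rw [sub_eq_add_neg, ← abs_mul]
        exact add_le_add (mul_le_mul_of_nonneg_left hσ ha) (neg_le_abs _)
    _ ≤ a * (-(1 + ρ ^ 2) / 2) + |b| * ((1 + ρ ^ 2) / 2) := by
        gcongr; exact abs_le_one_add_sq_div_two ρ
    _ = -((a - |b|) * ((1 + ρ ^ 2) / 2)) := by ring
    _ < 0 := neg_neg_of_pos (mul_pos (sub_pos.mpr hb) hρ)

lemma abs_coeff_lt_two_mul_re_sub_one {L η : ℂ} {x y : ℝ} (hLim : 0 ≤ L.im)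
    (hcond : 1 + L.im + ‖η‖ ≤ L.re - 1 / 2) (hxy : x ^ 2 + y ^ 2 < 1) :
    |2 * x * y - 2 * y * η.re - 2 * x * η.im - 2 * L.im| < 2 * L.re - 1 := by
  have hxy' := abs_lt.mp (abs_two_mul_lt_one hxy)
  have hη := abs_le.mp (abs_mul_re_add_mul_im_le_norm hxy.le η)
  rw [abs_lt]
  constructor <;> linarith

theorem admissibility_one_general (L η : ℂ) (hL : (1 : ℝ) / 2 ≤ L.re) (hLim : 1 ≤ L.im)
    (hcond : (1 + L.im + ‖η‖) ^ 2 ≤ (L.re - 1 / 2) ^ 2)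
    (x y : ℝ) (hxy : x ^ 2 + y ^ 2 < 1)
    (ρ σ μ : ℝ) (hμσ : μ + σ ≤ 0) (hσ : σ ≤ -(1 + ρ ^ 2) / 2) :
    (μ + σ) + (2 * L.re - 1) * σ
      - (2 * x * y - 2 * y * η.re - 2 * x * η.im - 2 * L.im) * ρ < 0 := by
  have hcond' : 1 + L.im + ‖η‖ ≤ L.re - 1 / 2 :=
    (sq_le_sq₀ (by positivity) (by linarith)).mp hcond
  have hcoeff := abs_coeff_lt_two_mul_re_sub_one (by linarith) hcond' hxy
  linarith [mul_sub_mul_neg_of_abs_lt hcoeff hσ]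

/-- admissibility inequality for Re Ψ(ρi, σ, μ+iν; x+iy) < 0. -/
theorem admissibility_one (L η : ℂ) (hL : (1 : ℝ) / 2 ≤ L.re) (hLim : 1 ≤ L.im)
    (hcond : (1 + L.im + ‖η‖) ^ 2 ≤ (L.re - 1 / 2) ^ 2)
    (x y : ℝ) (hx : x ∈ Set.Ioo (-1 : ℝ) 1) (hy : y ∈ Set.Ioo (-1 : ℝ) 1)
    (hxy : x ^ 2 + y ^ 2 < 1)
    (ρ σ μ : ℝ) (hμσ : μ + σ ≤ 0) (hσ : σ ≤ -(1 + ρ ^ 2) / 2) :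
    (μ + σ) + (2 * L.re - 1) * σ
      - (2 * x * y - 2 * y * η.re - 2 * x * η.im - 2 * L.im) * ρ < 0 :=
  admissibility_one_general L η hL hLim hcond x y hxy ρ σ μ hμσ hσ
end

section
/- Let L, η ∈ ℂ with |η| ≤ Re(L) − (Im L)²/3 − 1/4. Then for all x, y ∈ ℝ with x²+y²<1 and all ρ, σ ∈ ℝ with σ ≤ −(1+ρ²)/2, one has σ − ρ² + x² − y² + 2ρ·Im(L) − 2x·Re(η) + 2y·Im(η) − 2Re(L) < 0. -/
/-! The terms in `σ` and `ρ` are bounded by `-1/2 + 2 (Im L)² / 3` after substituting the bound on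
`σ` and completing the square in `ρ`; `x² - y² < 1`; and the terms in `η` are `-2 Re ((x + iy) η)`,
at most `2 ‖η‖` since `|x + iy| < 1`. The hypothesis on `‖η‖` makes these bounds add up to `0`. -/

lemma Complex.neg_mul_re_add_mul_im_le_norm (η : ℂ) {x y : ℝ} (hxy : x ^ 2 + y ^ 2 ≤ 1) :
    -(x * η.re) + y * η.im ≤ ‖η‖ := by
  have hz : ‖(⟨x, y⟩ : ℂ)‖ ≤ 1 := by
    rw [← sq_le_one_iff₀ (norm_nonneg _), Complex.sq_norm, Complex.normSq_mk]
    nlinarith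
  calc -(x * η.re) + y * η.im = (-(⟨x, y⟩ * η) : ℂ).re := by simp; ring
    _ ≤ ‖(⟨x, y⟩ : ℂ)‖ * ‖η‖ := by simpa using Complex.re_le_norm (-(⟨x, y⟩ * η))
    _ ≤ ‖η‖ := mul_le_of_le_one_left (norm_nonneg η) hz

/-- admissibility inequality in the starlikeness proof. -/
theorem admissibility_two (L η : ℂ)
    (hcond : ‖η‖ ≤ L.re - (L.im) ^ 2 / 3 - 1 / 4)
    (x y : ℝ) (hxy : x ^ 2 + y ^ 2 < 1)
    (ρ σ : ℝ) (hσ : σ ≤ -(1 + ρ ^ 2) / 2) :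
    σ - ρ ^ 2 + x ^ 2 - y ^ 2 + 2 * ρ * L.im - 2 * x * η.re + 2 * y * η.im - 2 * L.re < 0 := by
  have hρ : 2 * ρ * L.im - 3 / 2 * ρ ^ 2 ≤ 2 / 3 * L.im ^ 2 := by
    nlinarith [sq_nonneg (3 * ρ - 2 * L.im)]
  have hη := η.neg_mul_re_add_mul_im_le_norm hxy.le
  linarith [sq_nonneg y]
end

section
/- Let (ρₙ) be a sequence of nonzero reals with Σ 1/ρₙ² < ∞, and let f(z) = z·e^{cz}·∏ₙ (1 − z/ρₙ)e^{z/ρₙ} for some c ∈ ℝ. Then for 0 < r < minₙ |ρₙ|, the function r ↦ r f′(r)/f(r) = 1 + cr − Σₙ r²/(ρₙ(ρₙ − r)) is strictly decreasing on (0, min{x₁, |y₁|}) when c ≤ 0, where x₁ is the smallest positive ρₙ and y₁ the negative ρₙ of largest value, and it tends to 1 as r → 0⁺. -/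
open Filter Set

private lemma denom_pos' {x₁ ρ r : ℝ} (hρ : ρ ≠ 0) (hρx : 0 < ρ → x₁ ≤ ρ)
    (hr : 0 < r) (hrx : r < x₁) : 0 < ρ * (ρ - r) := by
  rcases lt_or_gt_of_ne hρ with h | h
  · exact mul_pos_of_neg_of_neg h (by linarith)
  · have := hρx h
    exact mul_pos h (by linarith)

private lemma term_lt' {x₁ ρ s t : ℝ} (hρ : ρ ≠ 0) (hρx : 0 < ρ → x₁ ≤ ρ)
    (hs : 0 < s) (hst : s < t) (htx : t < x₁) :
    s ^ 2 / (ρ * (ρ - s)) < t ^ 2 / (ρ * (ρ - t)) := by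
  have ht : 0 < t := hs.trans hst
  have hsx : s < x₁ := hst.trans htx
  have hds := denom_pos' hρ hρx hs hsx
  have hdt := denom_pos' hρ hρx ht htx
  rw [div_lt_div_iff₀ hds hdt]
  rcases lt_or_gt_of_ne hρ with h | h
  · have hfac : ρ * (t + s) - s * t < 0 := by nlinarith
    nlinarith [mul_pos_of_neg_of_neg h (mul_neg_of_pos_of_neg (sub_pos.2 hst) hfac)]
  · have hx := hρx h
    have hfac : 0 < ρ * (t + s) - s * t := by nlinarith
    nlinarith [mul_pos h (mul_pos (sub_pos.2 hst) hfac)]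

private lemma term_le_const' {x₁ ρ r : ℝ} (hρ : ρ ≠ 0) (hρx : 0 < ρ → x₁ ≤ ρ)
    (hx : 0 < x₁) (hr : 0 < r) (hrx : r < x₁) :
    r ^ 2 / (ρ * (ρ - r)) ≤ (r ^ 2 * x₁ / (x₁ - r)) * (1 / ρ ^ 2) := by
  have hd := denom_pos' hρ hρx hr hrx
  have hρ2 : (0:ℝ) < ρ ^ 2 := by positivity
  have hxr : 0 < x₁ - r := by linarith
  rw [div_mul_div_comm, mul_one, div_le_div_iff₀ hd (by positivity)]
  have key : x₁ * ρ ≤ ρ ^ 2 := by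
    rcases lt_or_gt_of_ne hρ with h | h
    · nlinarith [mul_pos hx (neg_pos.2 h)]
    · have := hρx h
      nlinarith
  nlinarith [mul_le_mul_of_nonneg_left key (show (0:ℝ) ≤ r ^ 3 by positivity)]

private lemma summable_term' (ρ : ℕ → ℝ) (hne : ∀ n, ρ n ≠ 0)
    (hsum : Summable fun n => 1 / (ρ n) ^ 2) {x₁ r : ℝ}
    (hρx : ∀ n, 0 < ρ n → x₁ ≤ ρ n) (hx : 0 < x₁) (hr : 0 < r) (hrx : r < x₁) :
    Summable fun n => r ^ 2 / (ρ n * (ρ n - r)) := by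
  refine Summable.of_nonneg_of_le
    (f := fun n => (r ^ 2 * x₁ / (x₁ - r)) * (1 / (ρ n) ^ 2))
    (fun n => (div_pos (pow_pos hr 2) (denom_pos' (hne n) (hρx n) hr hrx)).le)
    (fun n => term_le_const' (hne n) (hρx n) hx hr hrx)
    (hsum.mul_left _)

/-- For real nonzero zeros ρₙ with Σ 1/ρₙ² < ∞ and c ≤ 0, the function
G(r) = 1 + c·r − Σₙ r²/(ρₙ(ρₙ − r)) (which equals r f′(r)/f(r) for the genus-1
Weierstrass product f) is strictly decreasing on (0, min{x₁, |y₁|}) and tends to 1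
as r → 0⁺, where x₁ is the smallest positive ρₙ and y₁ the largest negative ρₙ. -/
theorem logDeriv_strictAnti (ρ : ℕ → ℝ) (hne : ∀ n, ρ n ≠ 0)
    (hsum : Summable fun n => 1 / (ρ n) ^ 2) (c : ℝ) (hc : c ≤ 0)
    (x₁ y₁ : ℝ) (hx₁ : IsLeast {t | ∃ n, ρ n = t ∧ 0 < t} x₁)
    (hy₁ : IsGreatest {t | ∃ n, ρ n = t ∧ t < 0} y₁) :
    StrictAntiOn (fun r : ℝ => 1 + c * r - ∑' n, r ^ 2 / (ρ n * (ρ n - r)))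
      (Set.Ioo 0 (min x₁ |y₁|))
    ∧ Filter.Tendsto (fun r : ℝ => 1 + c * r - ∑' n, r ^ 2 / (ρ n * (ρ n - r)))
        (nhdsWithin 0 (Set.Ioi 0)) (nhds 1) := by
  obtain ⟨⟨n₀, hn₀, hx⟩, hlb⟩ := hx₁
  have hρx : ∀ n, 0 < ρ n → x₁ ≤ ρ n := fun n h => hlb ⟨n, rfl, h⟩
  have hx' : 0 < x₁ := hn₀ ▸ hx
  constructor
  · intro s hs t ht hst
    have hsx : s < x₁ := hs.2.trans_le (min_le_left _ _)
    have htx : t < x₁ := ht.2.trans_le (min_le_left _ _)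
    have hT : (∑' n, s ^ 2 / (ρ n * (ρ n - s))) < ∑' n, t ^ 2 / (ρ n * (ρ n - t)) := by
      refine Summable.tsum_lt_tsum (i := 0) (fun n => (term_lt' (hne n) (hρx n) hs.1 hst htx).le)
        (term_lt' (hne 0) (hρx 0) hs.1 hst htx)
        (summable_term' ρ hne hsum hρx hx' hs.1 hsx)
        (summable_term' ρ hne hsum hρx hx' (hs.1.trans hst) htx)
    have : c * t ≤ c * s := mul_le_mul_of_nonpos_left hst.le hc
    simp only
    linarith
  · have h1 : Tendsto (fun r : ℝ => 1 + c * r) (nhdsWithin 0 (Ioi 0)) (nhds 1) := by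
      have h0 : Tendsto (fun r : ℝ => 1 + c * r) (nhds 0) (nhds (1 + c * 0)) :=
        Continuous.tendsto (by continuity) 0
      have := h0.mono_left (nhdsWithin_le_nhds (s := Ioi (0:ℝ)))
      simpa using this
    have h2 : Tendsto (fun r : ℝ => ∑' n, r ^ 2 / (ρ n * (ρ n - r)))
        (nhdsWithin 0 (Ioi 0)) (nhds 0) := by
      have hmem : Ioo (0:ℝ) (x₁ / 2) ∈ nhdsWithin (0:ℝ) (Ioi 0) :=
        Ioo_mem_nhdsGT_of_mem ⟨le_refl _, by linarith⟩
      have S := hsum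
      apply squeeze_zero' (g := fun r => (2 * ∑' n, 1 / (ρ n) ^ 2) * r ^ 2)
      · filter_upwards [hmem] with r hr
        exact tsum_nonneg fun n =>
          (div_pos (pow_pos hr.1 2) (denom_pos' (hne n) (hρx n) hr.1 (by linarith [hr.2]))).le
      · filter_upwards [hmem] with r hr
        have hrx : r < x₁ := by linarith [hr.2]
        have hterm : ∀ n, r ^ 2 / (ρ n * (ρ n - r)) ≤ (2 * r ^ 2) * (1 / (ρ n) ^ 2) := by
          intro n
          have hd := denom_pos' (hne n) (hρx n) hr.1 hrx
          have hρ2 : (0:ℝ) < (ρ n) ^ 2 := by have := hne n; positivity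
          rw [mul_one_div, div_le_div_iff₀ hd hρ2]
          have key : 0 ≤ ρ n * (ρ n - 2 * r) := by
            rcases lt_or_gt_of_ne (hne n) with h | h
            · exact (mul_pos_of_neg_of_neg h (by linarith [hr.1] : ρ n - 2 * r < 0)).le
            · have hge := hρx n h
              have : 2 * r < ρ n := by linarith [hr.2]
              nlinarith
          nlinarith [mul_nonneg (sq_nonneg r) key]
        calc (∑' n, r ^ 2 / (ρ n * (ρ n - r)))
            ≤ ∑' n, (2 * r ^ 2) * (1 / (ρ n) ^ 2) :=
              Summable.tsum_le_tsum hterm (summable_term' ρ hne hsum hρx hx' hr.1 hrx)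
                (hsum.mul_left _)
          _ = (2 * ∑' n, 1 / (ρ n) ^ 2) * r ^ 2 := by
              rw [tsum_mul_left]; ring
      · have : Tendsto (fun r : ℝ => (2 * ∑' n, 1 / (ρ n) ^ 2) * r ^ 2) (nhds 0)
            (nhds ((2 * ∑' n, 1 / (ρ n) ^ 2) * 0 ^ 2)) :=
          (continuous_const.mul (continuous_pow 2)).tendsto 0
        simpa using this.mono_left (nhdsWithin_le_nhds (s := Ioi (0:ℝ)))
    have := h1.sub h2
    simpa using this
end

section
/- Let (ρₙ) be positive reals and (σₙ) negative reals, all with Σ(1/ρₙ² + 1/σₙ²) < ∞, c ≤ 0, and define G(r) = 1 + cr − Σₙ [r²/(ρₙ(ρₙ−r)) + r²/(σₙ(σₙ−r))] for 0 < r < min{ρ₁, |σ₁|} (ρ₁ = min ρₙ, σ₁ = max σₙ). Then G(r) → −∞ as r → ρ₁⁻ (assuming ρ₁ ≤ |σ₁|), and hence for any β < 1 the equation G(r) = β has a smallest positive root. -/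
open Filter Set

section Aux

variable {ρ σ : ℕ → ℝ} {ρ₁ : ℝ}

private lemma term_nonneg (hρ : ∀ n, 0 < ρ n) (hσ : ∀ n, σ n < 0)
    (hle : ∀ n, ρ₁ ≤ ρ n) {r : ℝ} (hr0 : 0 ≤ r) (hr1 : r < ρ₁) (n : ℕ) :
    0 ≤ r ^ 2 / (ρ n * (ρ n - r)) + r ^ 2 / (σ n * (σ n - r)) := by
  have h1 : 0 < ρ n * (ρ n - r) := mul_pos (hρ n) (by linarith [hle n])
  have h2 : 0 < σ n * (σ n - r) := mul_pos_of_neg_of_neg (hσ n) (by linarith [hσ n])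
  positivity

private lemma term_bound (hρ : ∀ n, 0 < ρ n) (hσ : ∀ n, σ n < 0)
    (hle : ∀ n, ρ₁ ≤ ρ n) (hρ₁ : 0 < ρ₁) {b r : ℝ} (hb : b < ρ₁)
    (hr0 : 0 ≤ r) (hrb : r ≤ b) (n : ℕ) :
    r ^ 2 / (ρ n * (ρ n - r)) + r ^ 2 / (σ n * (σ n - r)) ≤
      (b ^ 2 * ρ₁ / (ρ₁ - b)) * (1 / (ρ n) ^ 2 + 1 / (σ n) ^ 2) := by
  have hρn := hρ n
  have hσn := hσ n
  have hlen := hle n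
  have hb0 : 0 ≤ b := le_trans hr0 hrb
  have hden2 : (0:ℝ) < ρ n ^ 2 * (ρ₁ - b) / ρ₁ :=
    div_pos (mul_pos (by positivity) (by linarith)) hρ₁
  have hA : r ^ 2 / (ρ n * (ρ n - r)) ≤ b ^ 2 / (ρ n ^ 2 * (ρ₁ - b) / ρ₁) := by
    apply div_le_div₀ (by positivity) (by nlinarith) hden2
    rw [div_le_iff₀ hρ₁]
    nlinarith [mul_nonneg hρn.le (sub_nonneg.mpr (mul_le_mul hlen hrb hr0 hρn.le))]
  have hAeq : b ^ 2 / (ρ n ^ 2 * (ρ₁ - b) / ρ₁)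
      = (b ^ 2 * ρ₁ / (ρ₁ - b)) * (1 / (ρ n) ^ 2) := by
    have h1 : ρ n ≠ 0 := ne_of_gt hρn
    have h2 : ρ₁ - b ≠ 0 := by linarith
    rw [div_div_eq_mul_div, div_mul_div_comm, mul_one, mul_comm (ρ n ^ 2) (ρ₁ - b)]
  have hσsq : (0:ℝ) < σ n ^ 2 := pow_two_pos_of_ne_zero (ne_of_lt hσn)
  have hB : r ^ 2 / (σ n * (σ n - r)) ≤ b ^ 2 / σ n ^ 2 := by
    apply div_le_div₀ (by positivity) (by nlinarith) hσsq (by nlinarith)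
  have hC : b ^ 2 ≤ b ^ 2 * ρ₁ / (ρ₁ - b) := by
    rw [le_div_iff₀ (by linarith)]
    nlinarith
  have hB' : b ^ 2 / σ n ^ 2 ≤ (b ^ 2 * ρ₁ / (ρ₁ - b)) * (1 / (σ n) ^ 2) := by
    rw [mul_one_div]
    exact div_le_div₀ (le_trans (by positivity) hC) hC hσsq le_rfl
  calc r ^ 2 / (ρ n * (ρ n - r)) + r ^ 2 / (σ n * (σ n - r))
      ≤ (b ^ 2 * ρ₁ / (ρ₁ - b)) * (1 / (ρ n) ^ 2) + (b ^ 2 * ρ₁ / (ρ₁ - b)) * (1 / (σ n) ^ 2) := by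
        refine add_le_add (hAeq ▸ hA) (hB.trans hB')
    _ = (b ^ 2 * ρ₁ / (ρ₁ - b)) * (1 / (ρ n) ^ 2 + 1 / (σ n) ^ 2) := by ring

private lemma summable_term (hρ : ∀ n, 0 < ρ n) (hσ : ∀ n, σ n < 0)
    (hsum : Summable fun n => 1 / (ρ n) ^ 2 + 1 / (σ n) ^ 2)
    (hle : ∀ n, ρ₁ ≤ ρ n) (hρ₁ : 0 < ρ₁) {r : ℝ} (hr0 : 0 ≤ r) (hr1 : r < ρ₁) :
    Summable fun n => r ^ 2 / (ρ n * (ρ n - r)) + r ^ 2 / (σ n * (σ n - r)) := by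
  apply Summable.of_nonneg_of_le (term_nonneg hρ hσ hle hr0 hr1)
    (fun n => term_bound hρ hσ hle hρ₁ hr1 hr0 le_rfl n) (hsum.mul_left _)

end Aux

/-- With positive zeros ρₙ, negative zeros σₙ, convergent inverse-square
sums and c ≤ 0, the function G(r) = 1 + cr − Σₙ [r²/(ρₙ(ρₙ−r)) + r²/(σₙ(σₙ−r))]
tends to −∞ as r → ρ₁⁻ (assuming ρ₁ ≤ |σ₁|), and for any β < 1 the equation
G(r) = β has a smallest positive root in (0, ρ₁). -/
theorem G_tendsto_atBot_and_smallest_root (ρ σ : ℕ → ℝ)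
    (hρ : ∀ n, 0 < ρ n) (hσ : ∀ n, σ n < 0)
    (hsum : Summable fun n => 1 / (ρ n) ^ 2 + 1 / (σ n) ^ 2)
    (c : ℝ) (hc : c ≤ 0) (ρ₁ σ₁ : ℝ)
    (hρ₁ : IsLeast (Set.range ρ) ρ₁) (hσ₁ : IsGreatest (Set.range σ) σ₁)
    (hord : ρ₁ ≤ |σ₁|)
    (G : ℝ → ℝ)
    (hG : ∀ r, G r = 1 + c * r
      - ∑' n, (r ^ 2 / (ρ n * (ρ n - r)) + r ^ 2 / (σ n * (σ n - r)))) :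
    Filter.Tendsto G (nhdsWithin ρ₁ (Set.Iio ρ₁)) Filter.atBot
    ∧ ∀ β : ℝ, β < 1 → ∃ r₀ ∈ Set.Ioo 0 ρ₁, G r₀ = β ∧
        ∀ r ∈ Set.Ioo 0 ρ₁, G r = β → r₀ ≤ r := by
  obtain ⟨⟨n₀, hn₀⟩, hleast⟩ := hρ₁
  have hle : ∀ n, ρ₁ ≤ ρ n := fun n => hleast ⟨n, rfl⟩
  have hρ₁pos : 0 < ρ₁ := hn₀ ▸ hρ n₀
  -- upper bound for G on (0, ρ₁)
  have key : ∀ r ∈ Ioo (0:ℝ) ρ₁, G r ≤ 1 - r ^ 2 / (ρ₁ * (ρ₁ - r)) := by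
    intro r hr
    obtain ⟨hr0, hr1⟩ := hr
    have hsummable := summable_term hρ hσ hsum hle hρ₁pos hr0.le hr1
    have hterm : r ^ 2 / (ρ n₀ * (ρ n₀ - r)) + r ^ 2 / (σ n₀ * (σ n₀ - r)) ≤
        ∑' n, (r ^ 2 / (ρ n * (ρ n - r)) + r ^ 2 / (σ n * (σ n - r))) :=
      Summable.le_tsum hsummable n₀ (fun j _ => term_nonneg hρ hσ hle hr0.le hr1 j)
    have hσterm : 0 ≤ r ^ 2 / (σ n₀ * (σ n₀ - r)) := by
      have : 0 < σ n₀ * (σ n₀ - r) := mul_pos_of_neg_of_neg (hσ n₀) (by linarith [hσ n₀])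
      positivity
    have hcr : c * r ≤ 0 := mul_nonpos_of_nonpos_of_nonneg hc hr0.le
    rw [hG r, hn₀] at *
    linarith
  -- the bounding function tends to -∞
  have hd : Tendsto (fun r => ρ₁ * (ρ₁ - r)) (nhdsWithin ρ₁ (Iio ρ₁)) (nhdsWithin 0 (Ioi 0)) := by
    apply tendsto_nhdsWithin_of_tendsto_nhds_of_eventually_within
    · have hcont : Continuous fun r : ℝ => ρ₁ * (ρ₁ - r) := by fun_prop
      have := hcont.tendsto ρ₁
      simp only [sub_self, mul_zero] at this
      exact this.mono_left nhdsWithin_le_nhds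
    · filter_upwards [self_mem_nhdsWithin] with r hr
      exact mul_pos hρ₁pos (by simpa using sub_pos.mpr (mem_Iio.mp hr))
  have hinv : Tendsto (fun r => (ρ₁ * (ρ₁ - r))⁻¹) (nhdsWithin ρ₁ (Iio ρ₁)) atTop :=
    tendsto_inv_nhdsGT_zero.comp hd
  have hnum : Tendsto (fun r : ℝ => r ^ 2) (nhdsWithin ρ₁ (Iio ρ₁)) (nhds (ρ₁ ^ 2)) :=
    ((continuous_pow 2).tendsto ρ₁).mono_left nhdsWithin_le_nhds
  have htop : Tendsto (fun r => r ^ 2 / (ρ₁ * (ρ₁ - r))) (nhdsWithin ρ₁ (Iio ρ₁)) atTop := by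
    simpa [div_eq_mul_inv] using hnum.pos_mul_atTop (by positivity) hinv
  have hbotfun : Tendsto (fun r => 1 - r ^ 2 / (ρ₁ * (ρ₁ - r))) (nhdsWithin ρ₁ (Iio ρ₁)) atBot := by
    simpa [sub_eq_add_neg, Function.comp] using tendsto_atBot_add_const_left _ 1 (tendsto_neg_atTop_atBot.comp htop)
  have part1 : Tendsto G (nhdsWithin ρ₁ (Iio ρ₁)) atBot := by
    apply Filter.tendsto_atBot_mono' _ _ hbotfun
    filter_upwards [self_mem_nhdsWithin, mem_nhdsWithin_of_mem_nhds (Ioi_mem_nhds hρ₁pos)]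
      with r h1 h2
    exact key r ⟨h2, h1⟩
  refine ⟨part1, fun β hβ => ?_⟩
  -- find b with G b < β
  have hev : ∀ᶠ r in nhdsWithin ρ₁ (Iio ρ₁),
      G r < β ∧ r ∈ Iio ρ₁ ∧ r ∈ Ioi (0:ℝ) := by
    filter_upwards [part1.eventually (eventually_lt_atBot β), self_mem_nhdsWithin,
      mem_nhdsWithin_of_mem_nhds (Ioi_mem_nhds hρ₁pos)] with r h1 h2 h3
    exact ⟨h1, h2, h3⟩
  obtain ⟨b, hbβ, hbρ, hb0⟩ := hev.exists
  rw [mem_Iio] at hbρ; rw [mem_Ioi] at hb0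
  -- continuity of G on [0, b]
  have hcontG : ContinuousOn G (Icc 0 b) := by
    have hcont : ContinuousOn (fun r => 1 + c * r
        - ∑' n, (r ^ 2 / (ρ n * (ρ n - r)) + r ^ 2 / (σ n * (σ n - r)))) (Icc 0 b) := by
      apply ContinuousOn.sub (by fun_prop)
      apply continuousOn_tsum (u := fun n => (b ^ 2 * ρ₁ / (ρ₁ - b)) * (1 / (ρ n) ^ 2 + 1 / (σ n) ^ 2))
      · intro n
        apply ContinuousOn.add
        · apply ContinuousOn.div (by fun_prop) (by fun_prop)
          intro r hr
          exact ne_of_gt (mul_pos (hρ n) (by linarith [hle n, hr.2]))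
        · apply ContinuousOn.div (by fun_prop) (by fun_prop)
          intro r hr
          exact ne_of_gt (mul_pos_of_neg_of_neg (hσ n) (by linarith [hσ n, hr.1]))
      · exact hsum.mul_left _
      · intro n r hr
        rw [Real.norm_eq_abs, abs_of_nonneg
          (term_nonneg hρ hσ hle hr.1 (lt_of_le_of_lt hr.2 hbρ) n)]
        exact term_bound hρ hσ hle hρ₁pos hbρ hr.1 hr.2 n
    exact hcont.congr (fun r _ => hG r)
  have hG0 : G 0 = 1 := by simp [hG 0]
  -- IVT
  have hx : β ∈ Icc (G b) (G 0) := ⟨hbβ.le, by rw [hG0]; linarith⟩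
  obtain ⟨x, hxmem, hGx⟩ := intermediate_value_Icc' hb0.le hcontG hx
  -- smallest root via compactness
  set A : Set ℝ := Icc 0 b ∩ G ⁻¹' {β} with hA
  have hAclosed : IsClosed A :=
    hcontG.preimage_isClosed_of_isClosed isClosed_Icc isClosed_singleton
  have hAcompact : IsCompact A :=
    isCompact_Icc.of_isClosed_subset hAclosed inter_subset_left
  have hAne : A.Nonempty := ⟨x, hxmem, by simpa using hGx⟩
  obtain ⟨r₀, ⟨hr₀Icc, hr₀β⟩, hr₀least⟩ := hAcompact.exists_isLeast hAne
  rw [mem_preimage, mem_singleton_iff] at hr₀β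
  have hr₀ne : r₀ ≠ 0 := by
    intro h
    rw [h, hG0] at hr₀β
    linarith
  have hr₀pos : 0 < r₀ := lt_of_le_of_ne hr₀Icc.1 (Ne.symm hr₀ne)
  refine ⟨r₀, ⟨hr₀pos, lt_of_le_of_lt hr₀Icc.2 hbρ⟩, hr₀β, ?_⟩
  intro r hr hGr
  by_cases hrb : r ≤ b
  · exact hr₀least ⟨⟨hr.1.le, hrb⟩, by simpa using hGr⟩
  · linarith [hr₀Icc.2]
end
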